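/- Let s > 0, 0 < δ < 1/4, and let q : ℝ → ℝ be smooth, even, nonnegative, supported in [-1,1] with ∫q = 1; set q_δ(x) = δ⁻¹q(x/δ). Let g_t(x) = 4 sinh²(x/2)·1_{[0,t]}(|x|) and g_± = g_{s±δ} * q_δ. Then there is an absolute constant C such that for all x ≥ 0: g_-(x) − C·δ·e^x·1_{[0,s]}(x) ≤ g_s(x) ≤ g_+(x) + C·δ·e^x·1_{[0,s]}(x). -/

import Mathlib

open Real MeasureTheory


/-- The sharp test function `g_t(x) = 4 sinh²(x/2) · 1_{[0,t]}(|x|)`. -/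
noncomputable def gSharp (t x : ℝ) : ℝ :=
  if |x| ≤ t then 4 * (Real.sinh (x / 2)) ^ 2 else 0

lemma abs_sinh_le_exp (t : ℝ) : |Real.sinh t| ≤ Real.exp |t| / 2 := by
  rw [Real.abs_sinh, Real.sinh_eq]
  have := Real.exp_pos (-|t|)
  linarith

lemma abs_sinh_le_mul (t : ℝ) : |Real.sinh t| ≤ |t| * Real.exp |t| := by
  rw [Real.abs_sinh, Real.sinh_eq]
  have h1 : Real.exp (-|t|) = Real.exp |t| * Real.exp (-(2*|t|)) := by
    rw [← Real.exp_add]; ring_nf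
  nlinarith [Real.add_one_le_exp (-(2*|t|)), Real.exp_pos |t|, abs_nonneg t]

lemma four_sinh_sq (z : ℝ) : 4 * Real.sinh (z/2) ^ 2 = 2 * Real.cosh z - 2 := by
  have h2 : Real.cosh z = Real.cosh (z/2) ^ 2 + Real.sinh (z/2) ^ 2 := by
    conv_lhs => rw [show z = 2*(z/2) by ring]
    exact Real.cosh_two_mul _
  have h1 := Real.cosh_sq (z/2)
  linarith

lemma cosh_sub_cosh' (a b : ℝ) :
    Real.cosh a - Real.cosh b = 2 * Real.sinh ((a+b)/2) * Real.sinh ((a-b)/2) := by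
  rw [Real.cosh_eq, Real.cosh_eq, Real.sinh_eq, Real.sinh_eq]
  have h1 : Real.exp ((a+b)/2) * Real.exp ((a-b)/2) = Real.exp a := by
    rw [← Real.exp_add]; ring_nf
  have h2 : Real.exp ((a+b)/2) * Real.exp (-((a-b)/2)) = Real.exp b := by
    rw [← Real.exp_add]; ring_nf
  have h3 : Real.exp (-((a+b)/2)) * Real.exp ((a-b)/2) = Real.exp (-b) := by
    rw [← Real.exp_add]; ring_nf
  have h4 : Real.exp (-((a+b)/2)) * Real.exp (-((a-b)/2)) = Real.exp (-a) := by
    rw [← Real.exp_add]; ring_nf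
  linear_combination (h2 + h3 - h1 - h4) / 2

/-- The key pointwise estimate. -/
lemma key_est (δ x y : ℝ) (hx : 0 ≤ x) (hδ0 : 0 < δ) (hδ : δ < 1/4) (hy : |y| ≤ δ) :
    |4 * Real.sinh ((x - y)/2) ^ 2 - 4 * Real.sinh (x/2) ^ 2| ≤ 2 * (δ * Real.exp x) := by
  rw [four_sinh_sq, four_sinh_sq]
  have h : (2 * Real.cosh (x - y) - 2) - (2 * Real.cosh x - 2)
      = 2 * (2 * Real.sinh ((x - y + x)/2) * Real.sinh ((x - y - x)/2)) := by
    rw [← cosh_sub_cosh' (x - y) x]; ring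
  rw [h]
  have e1 : |Real.sinh ((x - y + x)/2)| ≤ Real.exp (x + δ/2) / 2 := by
    refine (abs_sinh_le_exp _).trans ?_
    have habs : |(x - y + x)/2| ≤ x + δ/2 := by
      have h1 : |(x - y + x)/2| ≤ |x| + |y|/2 := by
        rw [show (x - y + x)/2 = x + (-y)/2 by ring]
        calc |x + (-y)/2| ≤ |x| + |(-y)/2| := abs_add_le _ _
          _ = |x| + |y|/2 := by rw [abs_div, abs_neg, abs_two]
      rw [abs_of_nonneg hx] at h1
      linarith
    have := Real.exp_le_exp.mpr habs
    linarith
  have e2 : |Real.sinh ((x - y - x)/2)| ≤ (δ/2) * Real.exp (δ/2) := by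
    refine (abs_sinh_le_mul _).trans ?_
    have hab : |(x - y - x)/2| ≤ δ/2 := by
      rw [show (x - y - x)/2 = -y/2 by ring, abs_div, abs_neg]
      have : |(2:ℝ)| = 2 := by norm_num
      rw [this]; linarith
    have h2 := Real.exp_le_exp.mpr hab
    exact mul_le_mul hab h2 (Real.exp_pos _).le (by positivity)
  have eδ : Real.exp δ ≤ 2 := by
    have h1 := Real.add_one_le_exp (-δ)
    have h2 : Real.exp (-δ) * Real.exp δ = 1 := by
      rw [← Real.exp_add]; simp
    nlinarith [mul_le_mul_of_nonneg_right h1 (Real.exp_pos δ).le, Real.exp_pos δ]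
  have m1 : |Real.sinh ((x - y + x)/2)| * |Real.sinh ((x - y - x)/2)|
      ≤ (Real.exp (x + δ/2) / 2) * ((δ/2) * Real.exp (δ/2)) :=
    mul_le_mul e1 e2 (abs_nonneg _) (by positivity)
  have m2 : Real.exp (x + δ/2) * Real.exp (δ/2) = Real.exp x * Real.exp δ := by
    rw [← Real.exp_add, ← Real.exp_add]; ring_nf
  calc |2 * (2 * Real.sinh ((x - y + x)/2) * Real.sinh ((x - y - x)/2))|
      = 4 * (|Real.sinh ((x - y + x)/2)| * |Real.sinh ((x - y - x)/2)|) := by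
        rw [abs_mul, abs_mul, abs_mul]; simp [abs_two]; ring
    _ ≤ 4 * ((Real.exp (x + δ/2) / 2) * ((δ/2) * Real.exp (δ/2))) := by linarith
    _ = δ * (Real.exp (x + δ/2) * Real.exp (δ/2)) := by ring
    _ = δ * (Real.exp x * Real.exp δ) := by rw [m2]
    _ ≤ 2 * (δ * Real.exp x) := by
        nlinarith [mul_pos hδ0 (Real.exp_pos x), eδ]

theorem stmt_16 :
    ∃ C : ℝ, 0 < C ∧ ∀ (q : ℝ → ℝ) (s δ : ℝ), 0 < s → 0 < δ → δ < 1 / 4 →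
      ContDiff ℝ (⊤ : ℕ∞) q → (∀ x, q (-x) = q x) → (∀ x, 0 ≤ q x) →
      (∀ x : ℝ, 1 < |x| → q x = 0) → (∫ x : ℝ, q x) = 1 →
      ∀ x : ℝ, 0 ≤ x →
        (∫ y : ℝ, gSharp (s - δ) (x - y) * (δ⁻¹ * q (y / δ)))
            - C * δ * Real.exp x * (if x ≤ s then 1 else 0) ≤ gSharp s x ∧
        gSharp s x ≤ (∫ y : ℝ, gSharp (s + δ) (x - y) * (δ⁻¹ * q (y / δ)))
            + C * δ * Real.exp x * (if x ≤ s then 1 else 0) := by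
  refine ⟨2, by norm_num, ?_⟩
  intro q s δ hs hδ0 hδ hq hqeven hqpos hqsupp hqint x hx
  have hgpos : ∀ t z : ℝ, 0 ≤ gSharp t z := by
    intro t z; unfold gSharp; split_ifs <;> positivity
  -- properties of the mollifier
  have hq_cont : Continuous q := hq.continuous
  have hq_cs : HasCompactSupport q := by
    apply HasCompactSupport.intro (isCompact_Icc (a := (-1:ℝ)) (b := 1))
    intro z hz
    apply hqsupp
    simp only [Set.mem_Icc, not_and_or, not_le] at hz
    rcases hz with h | h
    · rw [abs_of_neg (by linarith)]; linarith
    · rw [abs_of_pos (by linarith)]; linarith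
  have hq_int : Integrable q := hq_cont.integrable_of_hasCompactSupport hq_cs
  have hQ_int : Integrable (fun y => δ⁻¹ * q (y / δ)) :=
    (hq_int.comp_div (ne_of_gt hδ0)).const_mul _
  have hQ_nonneg : ∀ y, 0 ≤ δ⁻¹ * q (y / δ) := fun y =>
    mul_nonneg (by positivity) (hqpos _)
  have hQ_supp : ∀ y : ℝ, δ < |y| → δ⁻¹ * q (y / δ) = 0 := by
    intro y hy
    have : 1 < |y / δ| := by
      rw [abs_div, abs_of_pos hδ0]
      rw [lt_div_iff₀ hδ0]; linarith
    rw [hqsupp _ this, mul_zero]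
  have hQ_total : (∫ y : ℝ, δ⁻¹ * q (y / δ)) = 1 := by
    rw [MeasureTheory.integral_const_mul, MeasureTheory.Measure.integral_comp_div q δ,
      abs_of_pos hδ0, smul_eq_mul, hqint, mul_one]
    exact inv_mul_cancel₀ (ne_of_gt hδ0)
  -- measurability and integrability
  have hg_meas : ∀ t : ℝ, Measurable (gSharp t) := by
    intro t
    unfold gSharp
    exact Measurable.ite (measurableSet_le continuous_abs.measurable measurable_const)
      (by fun_prop) measurable_const
  have hInt : ∀ t : ℝ, Integrable (fun y => gSharp t (x - y) * (δ⁻¹ * q (y / δ))) := by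
    intro t
    apply Integrable.bdd_mul (c := Real.exp t) hQ_int
    · exact ((hg_meas t).comp (measurable_const.sub measurable_id)).aestronglyMeasurable
    · refine Filter.Eventually.of_forall (fun z => ?_)
      unfold gSharp
      split_ifs with h
      · rw [Real.norm_eq_abs, abs_of_nonneg (by positivity)]
        have h1 : |Real.sinh ((x - z)/2)| ≤ Real.exp |(x - z)/2| / 2 := abs_sinh_le_exp _
        have h2 : Real.exp |(x - z)/2| ≤ Real.exp (t/2) := by
          apply Real.exp_le_exp.mpr
          rw [abs_div]
          have : |(2:ℝ)| = 2 := by norm_num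
          rw [this]; linarith
        have h3 : Real.exp (t/2) * Real.exp (t/2) = Real.exp t := by
          rw [← Real.exp_add]; ring_nf
        nlinarith [abs_nonneg (Real.sinh ((x - z)/2)), Real.exp_pos |(x - z)/2|,
          sq_abs (Real.sinh ((x - z)/2))]
      · simp [Real.exp_pos t |>.le]
  by_cases hxs : x ≤ s
  · -- x in [0, s]
    simp only [if_pos hxs, mul_one]
    have hgx : gSharp s x = 4 * Real.sinh (x/2) ^ 2 := by
      unfold gSharp; rw [if_pos]; rwa [abs_of_nonneg hx]
    constructor
    · -- lower bound
      have hmono : ∀ y : ℝ, gSharp (s - δ) (x - y) * (δ⁻¹ * q (y / δ))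
          ≤ (gSharp s x + 2 * (δ * Real.exp x)) * (δ⁻¹ * q (y / δ)) := by
        intro y
        by_cases hQy : δ⁻¹ * q (y / δ) = 0
        · rw [hQy, mul_zero, mul_zero]
        · have hyδ : |y| ≤ δ := by
            by_contra hc
            exact hQy (hQ_supp y (lt_of_not_ge hc))
          apply mul_le_mul_of_nonneg_right _ (hQ_nonneg y)
          have h1 : gSharp (s - δ) (x - y) ≤ 4 * Real.sinh ((x - y)/2) ^ 2 := by
            unfold gSharp; split_ifs with h
            · exact le_rfl
            · positivity
          have h2 := key_est δ x y hx hδ0 hδ hyδ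
          rw [abs_le] at h2
          rw [hgx]
          linarith
      calc (∫ y : ℝ, gSharp (s - δ) (x - y) * (δ⁻¹ * q (y / δ))) - 2 * δ * Real.exp x
          ≤ (∫ y : ℝ, (gSharp s x + 2 * (δ * Real.exp x)) * (δ⁻¹ * q (y / δ)))
              - 2 * δ * Real.exp x := by
            linarith [integral_mono (hInt _) (hQ_int.const_mul _) hmono]
        _ = gSharp s x := by
            rw [MeasureTheory.integral_const_mul, hQ_total, mul_one]; ring
    · -- upper bound
      have hmono : ∀ y : ℝ, (gSharp s x - 2 * (δ * Real.exp x)) * (δ⁻¹ * q (y / δ))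
          ≤ gSharp (s + δ) (x - y) * (δ⁻¹ * q (y / δ)) := by
        intro y
        by_cases hQy : δ⁻¹ * q (y / δ) = 0
        · rw [hQy, mul_zero, mul_zero]
        · have hyδ : |y| ≤ δ := by
            by_contra hc
            exact hQy (hQ_supp y (lt_of_not_ge hc))
          apply mul_le_mul_of_nonneg_right _ (hQ_nonneg y)
          have habs : |x - y| ≤ s + δ := by
            calc |x - y| ≤ |x| + |y| := abs_sub _ _
              _ ≤ s + δ := by rw [abs_of_nonneg hx]; linarith
          have h1 : gSharp (s + δ) (x - y) = 4 * Real.sinh ((x - y)/2) ^ 2 := if_pos habs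
          have h2 := key_est δ x y hx hδ0 hδ hyδ
          rw [abs_le] at h2
          rw [hgx, h1]
          linarith
      calc gSharp s x
          = (∫ y : ℝ, (gSharp s x - 2 * (δ * Real.exp x)) * (δ⁻¹ * q (y / δ)))
              + 2 * δ * Real.exp x := by
            rw [MeasureTheory.integral_const_mul, hQ_total, mul_one]; ring
        _ ≤ (∫ y : ℝ, gSharp (s + δ) (x - y) * (δ⁻¹ * q (y / δ))) + 2 * δ * Real.exp x := by
            linarith [integral_mono ((hQ_int.const_mul _)) (hInt _) hmono]
  · -- x > s
    have hsx : s < x := lt_of_not_ge hxs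
    simp only [if_neg hxs, mul_zero]
    have hgx : gSharp s x = 0 := by
      unfold gSharp; rw [if_neg]; rw [abs_of_nonneg hx]; exact not_le.mpr hsx
    constructor
    · -- lower bound: the integral vanishes
      have hzero : ∀ y : ℝ, gSharp (s - δ) (x - y) * (δ⁻¹ * q (y / δ)) = 0 := by
        intro y
        by_cases hQy : δ⁻¹ * q (y / δ) = 0
        · rw [hQy, mul_zero]
        · have hyδ : |y| ≤ δ := by
            by_contra hc
            exact hQy (hQ_supp y (lt_of_not_ge hc))
          have hg0 : gSharp (s - δ) (x - y) = 0 := by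
            unfold gSharp; rw [if_neg]
            push_neg
            have h1 : x - δ ≤ |x - y| := by
              have := abs_sub_abs_le_abs_sub x y
              rw [abs_of_nonneg hx] at this
              linarith
            linarith
          rw [hg0, zero_mul]
      rw [hgx]
      have : (∫ y : ℝ, gSharp (s - δ) (x - y) * (δ⁻¹ * q (y / δ))) = 0 := by
        simp only [hzero, integral_zero]
      rw [this]; norm_num
    · rw [hgx]
      have : 0 ≤ ∫ y : ℝ, gSharp (s + δ) (x - y) * (δ⁻¹ * q (y / δ)) :=
        integral_nonneg fun y => mul_nonneg (hgpos _ _) (hQ_nonneg y)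
      linarith
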